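/- arXiv:1207.3885 — 8 statements merged into one kernel-verified Lean document; each statement's English description precedes it below -/
import Mathlib

section
/- Let (X, d_X) and (Y, d_Y) be metric spaces and let C : X ⇉ Y be a correspondence with distortion at most ε. If a finite subset σ ⊆ X admits an a-centre (a point x̄ ∈ X with d_X(x̄, x) ≤ a for all x ∈ σ), then every finite subset of C(σ) admits an (a+ε)-centre in Y. In other words, C is ε-simplicial from the intrinsic Čech filtration of X to that of Y. -/
/-- The image of a set under a multivalued map (relation) `C : X ⇉ Y`. -/
def mvImage {X Y : Type*} (C : Set (X × Y)) (s : Set X) : Set Y :=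
  {y | ∃ x ∈ s, (x, y) ∈ C}

theorem stmt4_general {X Y : Type*} [MetricSpace X] [MetricSpace Y] (C : Set (X × Y)) (ε : ℝ)
    (hX : ∀ x : X, ∃ y : Y, (x, y) ∈ C)
    (hdis : ∀ x x' y y', (x, y) ∈ C → (x', y') ∈ C → |dist x x' - dist y y'| ≤ ε) :
    ∀ (a : ℝ) (σ : Finset X), σ.Nonempty → (∃ xbar : X, ∀ x ∈ σ, dist xbar x ≤ a) →
      ∀ τ : Finset Y, ↑τ ⊆ mvImage C ↑σ →
        ∃ ybar : Y, ∀ y ∈ τ, dist ybar y ≤ a + ε := by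
  rintro a σ - ⟨xbar, hxbar⟩ τ hτ
  -- any partner of the centre `xbar` under `C` is a centre for `τ`
  obtain ⟨ybar, hybar⟩ := hX xbar
  refine ⟨ybar, fun y hy => ?_⟩
  obtain ⟨x, hx, hxy⟩ := hτ hy
  have hdist : dist ybar y - dist xbar x ≤ ε := (abs_sub_le_iff.mp (hdis xbar x ybar y hybar hxy)).2
  linarith [hxbar x hx]

theorem stmt4 {X Y : Type*} [MetricSpace X] [MetricSpace Y] (C : Set (X × Y)) (ε : ℝ)
    (hX : ∀ x : X, ∃ y : Y, (x, y) ∈ C) (hY : ∀ y : Y, ∃ x : X, (x, y) ∈ C)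
    (hdis : ∀ x x' y y', (x, y) ∈ C → (x', y') ∈ C → |dist x x' - dist y y'| ≤ ε) :
    ∀ (a : ℝ) (σ : Finset X), σ.Nonempty → (∃ xbar : X, ∀ x ∈ σ, dist xbar x ≤ a) →
      ∀ τ : Finset Y, ↑τ ⊆ mvImage C ↑σ →
        ∃ ybar : Y, ∀ y ∈ τ, dist ybar y ≤ a + ε :=
  stmt4_general C ε hX hdis
end

section
/- Let L, W, L', W' be sets with functions Λ : L × W → ℝ and Λ' : L' × W' → ℝ, and let C : L ⇉ L', D : W ⇉ W' be correspondences with dis(C,D) ≤ ε. If a finite subset σ ⊆ L has a point w ∈ W with Λ(l,w) ≤ a for all l ∈ σ, then every finite subset σ' ⊆ C(σ) has a point w' ∈ W' with Λ'(l',w') ≤ a + ε for all l' ∈ σ'. That is, C is ε-simplicial from the Dowker filtration of Λ to the Dowker filtration of Λ'. -/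
theorem stmt5_general {L W L' W' : Type*} (Λ : L → W → ℝ) (Λ' : L' → W' → ℝ)
    (C : Set (L × L')) (D : Set (W × W')) (ε : ℝ)
    (hD1 : ∀ w : W, ∃ w' : W', (w, w') ∈ D)
    (hdis : ∀ l l' w w', (l, l') ∈ C → (w, w') ∈ D → |Λ l w - Λ' l' w'| ≤ ε) :
    ∀ (a : ℝ) (σ : Finset L) (w : W), (∀ l ∈ σ, Λ l w ≤ a) →
      ∀ σ' : Finset L', ↑σ' ⊆ mvImage C ↑σ →
        ∃ w' : W', ∀ l' ∈ σ', Λ' l' w' ≤ a + ε := by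
  intro a σ w hw σ' hσ'
  obtain ⟨w', hww'⟩ := hD1 w
  refine ⟨w', fun l' hl' => ?_⟩
  obtain ⟨l, hl, hll'⟩ := hσ' hl'
  have hclose := (abs_sub_le_iff.mp (hdis l l' w w' hll' hww')).2
  linarith [hw l hl]

theorem stmt5 {L W L' W' : Type*} (Λ : L → W → ℝ) (Λ' : L' → W' → ℝ)
    (C : Set (L × L')) (D : Set (W × W')) (ε : ℝ)
    (hC1 : ∀ l : L, ∃ l' : L', (l, l') ∈ C) (hC2 : ∀ l' : L', ∃ l : L, (l, l') ∈ C)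
    (hD1 : ∀ w : W, ∃ w' : W', (w, w') ∈ D) (hD2 : ∀ w' : W', ∃ w : W, (w, w') ∈ D)
    (hdis : ∀ l l' w w', (l, l') ∈ C → (w, w') ∈ D → |Λ l w - Λ' l' w'| ≤ ε) :
    ∀ (a : ℝ) (σ : Finset L) (w : W), (∀ l ∈ σ, Λ l w ≤ a) →
      ∀ σ' : Finset L', ↑σ' ⊆ mvImage C ↑σ →
        ∃ w' : W', ∀ l' ∈ σ', Λ' l' w' ≤ a + ε :=
  stmt5_general Λ Λ' C D ε hD1 hdis
end

section
/- Let L, L', W be subsets of a metric space with Hausdorff distance d_H(L,L') < ε. If a finite subset σ ⊆ L has a point w ∈ W with d(l,w) ≤ a for all l ∈ σ, then there exists a finite subset σ' ⊆ L' with d(l', w) ≤ a + ε for all l' ∈ σ', obtained by replacing each l ∈ σ by some l' ∈ L' with d(l,l') < ε; consequently the ambient Čech filtrations Čech(L,W) and Čech(L',W) admit ε-simplicial correspondences in both directions. -/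
theorem Finset.exists_subset_biTotal_of_forall_exists {α β : Type*} (σ : Finset α) (S : Set β)
    (R : α → β → Prop) (h : ∀ x ∈ σ, ∃ y ∈ S, R x y) :
    ∃ τ : Finset β, ↑τ ⊆ S ∧ (∀ x ∈ σ, ∃ y ∈ τ, R x y) ∧ ∀ y ∈ τ, ∃ x ∈ σ, R x y := by
  classical
  choose f hfS hfR using h
  refine ⟨σ.attach.image fun x => f x.1 x.2, ?_, ?_, ?_⟩
  · rintro _ hy
    obtain ⟨x, -, rfl⟩ := Finset.mem_image.1 hy
    exact hfS x.1 x.2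
  · exact fun x hx => ⟨f x hx, Finset.mem_image_of_mem _ (Finset.mem_attach _ ⟨x, hx⟩), hfR x hx⟩
  · intro y hy
    obtain ⟨x, -, rfl⟩ := Finset.mem_image.1 hy
    exact ⟨x.1, x.2, hfR x.1 x.2⟩

theorem stmt6_general {Z : Type*} [MetricSpace Z] (L L' W : Set Z) (ε : ℝ)
    (h1 : ∀ l ∈ L, ∃ l' ∈ L', dist l l' < ε) :
    ∀ (a : ℝ) (σ : Finset Z), ↑σ ⊆ L → ∀ w ∈ W, (∀ l ∈ σ, dist l w ≤ a) →
      ∃ σ' : Finset Z, ↑σ' ⊆ L' ∧ (∀ l' ∈ σ', dist l' w ≤ a + ε) ∧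
        (∀ l ∈ σ, ∃ l' ∈ σ', dist l l' < ε) ∧ (∀ l' ∈ σ', ∃ l ∈ σ, dist l l' < ε) := by
  intro a σ hσL w _ hσw
  obtain ⟨σ', hσ'L', hσσ', hσ'σ⟩ :=
    σ.exists_subset_biTotal_of_forall_exists L' (fun l l' => dist l l' < ε) fun l hl => h1 l (hσL hl)
  refine ⟨σ', hσ'L', fun l' hl' => ?_, hσσ', hσ'σ⟩
  obtain ⟨l, hl, hll'⟩ := hσ'σ l' hl'
  linarith [dist_triangle_left l' w l, hσw l hl]

theorem stmt6 {Z : Type*} [MetricSpace Z] (L L' W : Set Z) (ε : ℝ)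
    (h1 : ∀ l ∈ L, ∃ l' ∈ L', dist l l' < ε) (h2 : ∀ l' ∈ L', ∃ l ∈ L, dist l l' < ε) :
    ∀ (a : ℝ) (σ : Finset Z), ↑σ ⊆ L → ∀ w ∈ W, (∀ l ∈ σ, dist l w ≤ a) →
      ∃ σ' : Finset Z, ↑σ' ⊆ L' ∧ (∀ l' ∈ σ', dist l' w ≤ a + ε) ∧
        (∀ l ∈ σ, ∃ l' ∈ σ', dist l l' < ε) ∧ (∀ l' ∈ σ', ∃ l ∈ σ, dist l l' < ε) :=
  stmt6_general L L' W ε h1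
end

section
/- Let L be a set, W and W' two witness sets with functions Λ : L × W → ℝ and Λ' : L × W' → ℝ, and C : W ⇉ W' a correspondence with distortion at most ε/2. If w ∈ W is an a-witness for a finite subset τ ⊆ L, then any w' ∈ C(w) is an (a+ε)-witness for τ. Consequently, every simplex of Wit(L,W;a) belongs to Wit(L,W';a+ε). -/
/-- `w` is an `a`-witness for the finite set of landmarks `τ ⊆ L`, with respect to the
function `Λ : L × W → ℝ`. -/
def IsWitness {L W : Type*} (Λ : L → W → ℝ) (a : ℝ) (w : W) (τ : Finset L) : Prop :=
  ∀ l ∈ τ, ∀ l' : L, l' ∉ τ → Λ l w ≤ Λ l' w + a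

theorem IsWitness.of_abs_sub_le {L W W' : Type*} {Λ : L → W → ℝ} {Λ' : L → W' → ℝ}
    {a δ : ℝ} {w : W} {w' : W'} {τ : Finset L} (hw : IsWitness Λ a w τ)
    (hδ : ∀ l, |Λ l w - Λ' l w'| ≤ δ) : IsWitness Λ' (a + 2 * δ) w' τ := by
  intro l hl l' hl'
  have hl_close := abs_le.1 (hδ l)
  have hl'_close := abs_le.1 (hδ l')
  linarith [hw l hl l' hl']

theorem stmt7_general {L W W' : Type*} (Λ : L → W → ℝ) (Λ' : L → W' → ℝ)
    (C : Set (W × W')) (ε : ℝ)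
    (hC1 : ∀ w : W, ∃ w' : W', (w, w') ∈ C)
    (hdis : ∀ (l : L) (w : W) (w' : W'), (w, w') ∈ C → |Λ l w - Λ' l w'| ≤ ε / 2) :
    (∀ (a : ℝ) (τ : Finset L) (w : W), IsWitness Λ a w τ →
        ∀ w' : W', (w, w') ∈ C → IsWitness Λ' (a + ε) w' τ) ∧
    (∀ (a : ℝ) (σ : Finset L), (∀ τ ⊆ σ, ∃ w : W, IsWitness Λ a w τ) →
        ∀ τ ⊆ σ, ∃ w' : W', IsWitness Λ' (a + ε) w' τ) := by
  have transfer : ∀ (a : ℝ) (τ : Finset L) (w : W), IsWitness Λ a w τ →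
      ∀ w' : W', (w, w') ∈ C → IsWitness Λ' (a + ε) w' τ := by
    intro a τ w hw w' hww'
    have := hw.of_abs_sub_le fun l => hdis l w w' hww'
    rwa [mul_div_cancel₀ ε two_ne_zero] at this
  refine ⟨transfer, fun a σ hσ τ hτ => ?_⟩
  obtain ⟨w, hw⟩ := hσ τ hτ
  obtain ⟨w', hww'⟩ := hC1 w
  exact ⟨w', transfer a τ w hw w' hww'⟩

theorem stmt7 {L W W' : Type*} (Λ : L → W → ℝ) (Λ' : L → W' → ℝ)
    (C : Set (W × W')) (ε : ℝ)
    (hC1 : ∀ w : W, ∃ w' : W', (w, w') ∈ C) (hC2 : ∀ w' : W', ∃ w : W, (w, w') ∈ C)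
    (hdis : ∀ (l : L) (w : W) (w' : W'), (w, w') ∈ C → |Λ l w - Λ' l w'| ≤ ε / 2) :
    (∀ (a : ℝ) (τ : Finset L) (w : W), IsWitness Λ a w τ →
        ∀ w' : W', (w, w') ∈ C → IsWitness Λ' (a + ε) w' τ) ∧
    (∀ (a : ℝ) (σ : Finset L), (∀ τ ⊆ σ, ∃ w : W, IsWitness Λ a w τ) →
        ∀ τ ⊆ σ, ∃ w' : W', IsWitness Λ' (a + ε) w' τ) :=
  stmt7_general Λ Λ' C ε hC1 hdis
end

section
/- There exist metric spaces that witness the instability of witness complexes under landmark perturbation: on the real line take W = L = {0,1} and L' = {−δ, 0, 1, 1+δ} for 0 < δ < 1/2. Then [0,1] is a simplex of Wit(L,W;a) for all a ≥ 0, but [0,1] is not a simplex of Wit(L',W;a) for any a ∈ [δ, 1−δ), even though the Hausdorff distance d_H(L,L') = δ. -/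
/-- `w` is an `a`-witness for `τ` relative to the landmark set `L ⊆ ℝ`:
`|l - w| ≤ |l' - w| + a` for all `l ∈ τ` and `l' ∈ L \ τ`. -/
def IsWitR (L : Set ℝ) (a w : ℝ) (τ : Set ℝ) : Prop :=
  ∀ l ∈ τ, ∀ l' ∈ L \ τ, |l - w| ≤ |l' - w| + a

/-- `σ` is a simplex of the witness complex `Wit(L, W; a)` on the real line:
`σ ⊆ L` and every subset of `σ` admits an `a`-witness in `W`. -/
def InWit (L W : Set ℝ) (a : ℝ) (σ : Set ℝ) : Prop :=
  σ ⊆ L ∧ ∀ τ ⊆ σ, ∃ w ∈ W, IsWitR L a w τ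

/-!
With `L = W = {0, 1}` every face of the edge `{0, 1}` is witnessed: the empty face and the whole
edge vacuously, a vertex by itself. After adding the landmarks `-δ` and `1 + δ`, a witness
`w ∈ {0, 1}` of the edge is at distance `1` from the far endpoint but only `δ` from the new landmark
next to it, which forces `1 ≤ δ + a`.
-/

open Metric

section Witness

variable {L : Set ℝ} {a w : ℝ}

theorem isWitR_empty : IsWitR L a w ∅ := fun _ hl => hl.elim

theorem isWitR_self : IsWitR L a w L := fun _ _ _ hl' => (hl'.2 hl'.1).elim

theorem isWitR_singleton_self (ha : 0 ≤ a) : IsWitR L a w {w} := by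
  rintro l rfl l' -
  simpa using add_nonneg (abs_nonneg (l' - l)) ha

theorem inWit_pair_self (x y : ℝ) (ha : 0 ≤ a) : InWit {x, y} {x, y} a {x, y} := by
  refine ⟨subset_rfl, fun τ hτ => ?_⟩
  rcases Set.subset_pair_iff_eq.mp hτ with rfl | rfl | rfl | rfl
  · exact ⟨x, by simp, isWitR_empty⟩
  · exact ⟨x, by simp, isWitR_singleton_self ha⟩
  · exact ⟨y, by simp, isWitR_singleton_self ha⟩
  · exact ⟨x, by simp, isWitR_self⟩

end Witness

theorem one_le_add_of_isWitR_perturbed {δ a w : ℝ} (hδ : 0 < δ) (hw : w ∈ ({0, 1} : Set ℝ))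
    (h : IsWitR {-δ, 0, 1, 1 + δ} a w {0, 1}) : 1 ≤ δ + a := by
  have hnew : -δ ∉ ({0, 1} : Set ℝ) ∧ 1 + δ ∉ ({0, 1} : Set ℝ) := by
    simp only [Set.mem_insert_iff, Set.mem_singleton_iff]
    constructor <;> rintro (h | h) <;> linarith
  rcases hw with rfl | rfl
  · have key := h 1 (by simp) (-δ) ⟨by simp, hnew.1⟩
    rwa [sub_zero, sub_zero, abs_one, abs_neg, abs_of_pos hδ] at key
  · have key := h 0 (by simp) (1 + δ) ⟨by simp, hnew.2⟩
    rwa [zero_sub, abs_neg, abs_one, add_sub_cancel_left, abs_of_pos hδ] at key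

theorem hausdorffDist_zero_one_perturbed {δ : ℝ} (hδ : 0 ≤ δ) :
    hausdorffDist ({0, 1} : Set ℝ) {-δ, 0, 1, 1 + δ} = δ := by
  have hfin : hausdorffEDist ({-δ, 0, 1, 1 + δ} : Set ℝ) {0, 1} ≠ ⊤ :=
    hausdorffEDist_ne_top_of_nonempty_of_bounded (by simp) (by simp)
      (Set.toFinite _).isBounded (Set.toFinite _).isBounded
  refine le_antisymm (hausdorffDist_le_of_mem_dist hδ ?_ ?_) ?_
  · rintro x (rfl | rfl)
    · exact ⟨0, by simp, by simpa using hδ⟩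
    · exact ⟨1, by simp, by simpa using hδ⟩
  · rintro x (rfl | rfl | rfl | rfl)
    · exact ⟨0, by simp, by simp [abs_of_nonneg hδ]⟩
    · exact ⟨0, by simpa using hδ⟩
    · exact ⟨1, by simpa using hδ⟩
    · exact ⟨1, by simp, by simp [abs_of_nonneg hδ]⟩
  · have hinf : δ ≤ infDist (-δ) ({0, 1} : Set ℝ) := by
      rw [le_infDist (by simp)]
      rintro y (rfl | rfl) <;> rw [Real.dist_eq, abs_of_nonpos] <;> linarith
    calc δ ≤ infDist (-δ) ({0, 1} : Set ℝ) := hinf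
      _ ≤ hausdorffDist ({-δ, 0, 1, 1 + δ} : Set ℝ) {0, 1} :=
          infDist_le_hausdorffDist_of_mem (by simp) hfin
      _ = _ := hausdorffDist_comm

theorem stmt8_general (δ : ℝ) (hδ : 0 < δ) :
    (∀ a : ℝ, 0 ≤ a → InWit {0, 1} {0, 1} a {0, 1}) ∧
    (∀ a : ℝ, δ ≤ a → a < 1 - δ → ¬ InWit {-δ, 0, 1, 1 + δ} {0, 1} a {0, 1}) ∧
    Metric.hausdorffDist ({0, 1} : Set ℝ) {-δ, 0, 1, 1 + δ} = δ := by
  refine ⟨fun a ha => inWit_pair_self 0 1 ha, ?_, hausdorffDist_zero_one_perturbed hδ.le⟩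
  rintro a - ha ⟨-, hwit⟩
  obtain ⟨w, hw, hwit_edge⟩ := hwit {0, 1} subset_rfl
  linarith [one_le_add_of_isWitR_perturbed hδ hw hwit_edge]

theorem stmt8 (δ : ℝ) (hδ : 0 < δ) (hδ' : δ < 1 / 2) :
    (∀ a : ℝ, 0 ≤ a → InWit {0, 1} {0, 1} a {0, 1}) ∧
    (∀ a : ℝ, δ ≤ a → a < 1 - δ → ¬ InWit {-δ, 0, 1, 1 + δ} {0, 1} a {0, 1}) ∧
    Metric.hausdorffDist ({0, 1} : Set ℝ) {-δ, 0, 1, 1 + δ} = δ :=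
  stmt8_general δ hδ
end

section
/- Let (X, d_X) be a path metric space (so that for any x, x' ∈ X and ε > 0 there exists z ∈ X with max(d(x,z), d(x',z)) ≤ d(x,x')/2 + ε) and let q > 0. Then the map on first homology H₁(Rips(X, (2/3)q)) → H₁(Rips(X,q)) induced by inclusion is surjective. -/
/-- The simplicial boundary operator on formal `𝕜`-linear combinations of
`(n+1)`-tuples of vertices of `X`. -/
noncomputable def bdry (𝕜 : Type*) [Field 𝕜] (X : Type*) (n : ℕ) :
    ((Fin (n + 1) → X) →₀ 𝕜) →ₗ[𝕜] ((Fin n → X) →₀ 𝕜) :=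
  Finsupp.lift ((Fin n → X) →₀ 𝕜) 𝕜 (Fin (n + 1) → X) fun σ =>
    ∑ i : Fin (n + 1), ((-1 : 𝕜) ^ (i : ℕ)) • Finsupp.single (σ ∘ i.succAbove) 1

/-- The subspace of chains supported on tuples satisfying `K` (the simplices of
a simplicial complex, given as a predicate on tuples of vertices). -/
noncomputable def chainsIn (𝕜 : Type*) [Field 𝕜] {X : Type*} (n : ℕ)
    (K : (Fin n → X) → Prop) : Submodule 𝕜 ((Fin n → X) →₀ 𝕜) :=
  Submodule.span 𝕜 {c | ∃ σ, K σ ∧ c = Finsupp.single σ (1 : 𝕜)}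

/-- The chain map induced by a vertex map `f : X → Y`. -/
noncomputable def pushChain (𝕜 : Type*) [Field 𝕜] {X Y : Type*} (n : ℕ) (f : X → Y) :
    ((Fin n → X) →₀ 𝕜) →ₗ[𝕜] ((Fin n → Y) →₀ 𝕜) :=
  Finsupp.lmapDomain 𝕜 𝕜 fun σ : Fin n → X => f ∘ σ

/-!
Choose for every pair `x, y` an approximate midpoint `m x y`; when `d(x, y) ≤ q` both halves
`[x, m]` and `[m, y]` have length at most `(2/3) q`. Subdividing every edge `[x, y]` of a 1-chain into
`[x, m] + [m, y]` preserves boundaries, and the subdivided chain differs from the original one by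
the boundary of the triangles `[x, m, y]`, which lie in `Rips(X, q)`.
-/

open Finsupp

noncomputable section

variable {𝕜 : Type*} [Field 𝕜] {X : Type*}

lemma exists_eq_pair (σ : Fin 2 → X) : ∃ a b, σ = ![a, b] :=
  ⟨σ 0, σ 1, (FinVec.etaExpand_eq σ).symm⟩

lemma bdry_single (n : ℕ) (σ : Fin (n + 1) → X) :
    bdry 𝕜 X n (single σ 1) = ∑ i : Fin (n + 1), (-1 : 𝕜) ^ (i : ℕ) • single (σ ∘ i.succAbove) 1 := by
  simp [bdry]

lemma bdry_one_single (a b : X) :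
    bdry 𝕜 X 1 (single ![a, b] 1) = single ![b] 1 - single ![a] 1 := by
  have h₀ : ![a, b] ∘ Fin.succ = ![b] := by ext i; fin_cases i; rfl
  have h₁ : ![a, b] ∘ (1 : Fin 2).succAbove = ![a] := by ext i; fin_cases i; rfl
  simp [bdry_single, Fin.sum_univ_two, h₀, h₁, sub_eq_add_neg]

lemma bdry_two_single (a b c : X) :
    bdry 𝕜 X 2 (single ![a, b, c] 1) = single ![b, c] 1 - single ![a, c] 1 + single ![a, b] 1 := by
  have h₀ : ![a, b, c] ∘ Fin.succ = ![b, c] := by ext i; fin_cases i <;> rfl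
  have h₁ : ![a, b, c] ∘ (1 : Fin 3).succAbove = ![a, c] := by ext i; fin_cases i <;> rfl
  have h₂ : ![a, b, c] ∘ (2 : Fin 3).succAbove = ![a, b] := by ext i; fin_cases i <;> rfl
  simp [bdry_single, Fin.sum_univ_three, h₀, h₁, h₂, sub_eq_add_neg]

lemma single_mem_chainsIn {n : ℕ} {K : (Fin n → X) → Prop} {σ : Fin n → X} (hσ : K σ) :
    single σ (1 : 𝕜) ∈ chainsIn 𝕜 n K :=
  Submodule.subset_span ⟨σ, hσ, rfl⟩

lemma chainsIn_le_comap {Y : Type*} {n k : ℕ} {K : (Fin n → X) → Prop} {L : (Fin k → Y) → Prop}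
    (f : ((Fin n → X) →₀ 𝕜) →ₗ[𝕜] ((Fin k → Y) →₀ 𝕜))
    (hf : ∀ σ, K σ → f (single σ 1) ∈ chainsIn 𝕜 k L) :
    chainsIn 𝕜 n K ≤ (chainsIn 𝕜 k L).comap f :=
  Submodule.span_le.2 <| by rintro _ ⟨σ, hσ, rfl⟩; exact hf σ hσ

def subdivide (m : X → X → X) : ((Fin 2 → X) →₀ 𝕜) →ₗ[𝕜] ((Fin 2 → X) →₀ 𝕜) :=
  Finsupp.lift _ 𝕜 _ fun σ => single ![σ 0, m (σ 0) (σ 1)] 1 + single ![m (σ 0) (σ 1), σ 1] 1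

def subdivisionHomotopy (m : X → X → X) : ((Fin 2 → X) →₀ 𝕜) →ₗ[𝕜] ((Fin 3 → X) →₀ 𝕜) :=
  Finsupp.lift _ 𝕜 _ fun σ => single ![σ 0, m (σ 0) (σ 1), σ 1] 1

variable (m : X → X → X)

@[simp]
lemma subdivide_single (a b : X) :
    subdivide m (single ![a, b] (1 : 𝕜)) = single ![a, m a b] 1 + single ![m a b, b] 1 := by
  simp [subdivide]

@[simp]
lemma subdivisionHomotopy_single (a b : X) :
    subdivisionHomotopy m (single ![a, b] (1 : 𝕜)) = single ![a, m a b, b] 1 := by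
  simp [subdivisionHomotopy]

lemma bdry_comp_subdivide : (bdry 𝕜 X 1).comp (subdivide m) = bdry 𝕜 X 1 := by
  refine Finsupp.lhom_ext' fun σ => LinearMap.ext_ring ?_
  obtain ⟨a, b, rfl⟩ := exists_eq_pair σ
  simp [bdry_one_single]

lemma id_sub_subdivide : LinearMap.id - subdivide m = -(bdry 𝕜 X 2).comp (subdivisionHomotopy m) := by
  refine Finsupp.lhom_ext' fun σ => LinearMap.ext_ring ?_
  obtain ⟨a, b, rfl⟩ := exists_eq_pair σ
  simp [bdry_two_single]
  abel

section Rips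

variable [PseudoMetricSpace X]

def IsRipsSimplex (r : ℝ) {n : ℕ} (σ : Fin n → X) : Prop :=
  ∀ i j, dist (σ i) (σ j) ≤ r

lemma isRipsSimplex_pair {r : ℝ} {a b : X} (hab : dist a b ≤ r) : IsRipsSimplex r ![a, b] := by
  have := dist_nonneg.trans hab
  intro i j
  fin_cases i <;> fin_cases j <;> simp [dist_comm, *]

lemma isRipsSimplex_triple {r : ℝ} {a b c : X} (hab : dist a b ≤ r) (hac : dist a c ≤ r)
    (hbc : dist b c ≤ r) : IsRipsSimplex r ![a, b, c] := by
  have := dist_nonneg.trans hab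
  intro i j
  fin_cases i <;> fin_cases j <;> simp [dist_comm, *]

lemma exists_midpoint_map
    (hpath : ∀ (x x' : X) (ε : ℝ), 0 < ε → ∃ z : X, max (dist x z) (dist x' z) ≤ dist x x' / 2 + ε)
    {q : ℝ} (hq : 0 < q) :
    ∃ m : X → X → X, ∀ x y, dist x y ≤ q → dist x (m x y) ≤ 2 / 3 * q ∧ dist y (m x y) ≤ 2 / 3 * q := by
  choose m hm using fun x y => hpath x y (q / 6) (by positivity)
  refine ⟨m, fun x y hxy => ?_⟩
  obtain ⟨hx, hy⟩ := max_le_iff.1 (hm x y)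
  constructor <;> linarith

variable {m : X → X → X} {a r : ℝ}

lemma subdivide_mem_chainsIn (hm : ∀ x y, dist x y ≤ r → dist x (m x y) ≤ a ∧ dist y (m x y) ≤ a)
    {c : (Fin 2 → X) →₀ 𝕜} (hc : c ∈ chainsIn 𝕜 2 (IsRipsSimplex r)) :
    subdivide m c ∈ chainsIn 𝕜 2 (IsRipsSimplex a) := by
  refine chainsIn_le_comap _ (fun σ hσ => ?_) hc
  obtain ⟨x, y, rfl⟩ := exists_eq_pair σ
  obtain ⟨hx, hy⟩ := hm x y (hσ 0 1)
  rw [subdivide_single]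
  exact add_mem (single_mem_chainsIn (isRipsSimplex_pair hx))
    (single_mem_chainsIn (isRipsSimplex_pair (dist_comm y _ ▸ hy)))

lemma subdivisionHomotopy_mem_chainsIn
    (hm : ∀ x y, dist x y ≤ r → dist x (m x y) ≤ a ∧ dist y (m x y) ≤ a) (har : a ≤ r)
    {c : (Fin 2 → X) →₀ 𝕜} (hc : c ∈ chainsIn 𝕜 2 (IsRipsSimplex r)) :
    subdivisionHomotopy m c ∈ chainsIn 𝕜 3 (IsRipsSimplex r) := by
  refine chainsIn_le_comap _ (fun σ hσ => ?_) hc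
  obtain ⟨x, y, rfl⟩ := exists_eq_pair σ
  obtain ⟨hx, hy⟩ := hm x y (hσ 0 1)
  rw [subdivisionHomotopy_single]
  exact single_mem_chainsIn <| isRipsSimplex_triple (hx.trans har) (hσ 0 1)
    (dist_comm y _ ▸ hy.trans har)

end Rips

end

theorem stmt13 (𝕜 : Type*) [Field 𝕜] {X : Type*} [MetricSpace X]
    -- path metric space: approximate midpoints exist
    (hpath : ∀ (x x' : X) (ε : ℝ), 0 < ε →
      ∃ z : X, max (dist x z) (dist x' z) ≤ dist x x' / 2 + ε)
    (q : ℝ) (hq : 0 < q)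
    -- surjectivity of H₁(Rips(X, (2/3)q)) → H₁(Rips(X, q)): every 1-cycle of
    -- Rips(X, q) is homologous in Rips(X, q) to a 1-cycle of Rips(X, (2/3)q)
    (c : (Fin 2 → X) →₀ 𝕜)
    (hc : c ∈ chainsIn 𝕜 2 (fun σ : Fin 2 → X => ∀ i j, dist (σ i) (σ j) ≤ q))
    (hcyc : bdry 𝕜 X 1 c = 0) :
    ∃ c' ∈ chainsIn 𝕜 2 (fun σ : Fin 2 → X => ∀ i j, dist (σ i) (σ j) ≤ 2 / 3 * q),
      bdry 𝕜 X 1 c' = 0 ∧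
      ∃ b ∈ chainsIn 𝕜 3 (fun σ : Fin 3 → X => ∀ i j, dist (σ i) (σ j) ≤ q),
        c - c' = bdry 𝕜 X 2 b := by
  obtain ⟨m, hm⟩ := exists_midpoint_map hpath hq
  refine ⟨subdivide m c, subdivide_mem_chainsIn hm hc, ?_, -subdivisionHomotopy m c,
    neg_mem (subdivisionHomotopy_mem_chainsIn hm (by linarith) hc), ?_⟩
  · rw [← LinearMap.comp_apply, bdry_comp_subdivide, hcyc]
  · rw [map_neg, ← LinearMap.comp_apply, ← LinearMap.neg_apply, ← id_sub_subdivide]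
    rfl
end

section
/- Let (X,d) be a path metric space and 0 < p < q. Then the inclusion-induced map H₁(Rips(X,p)) → H₁(Rips(X,q)) is surjective. -/
namespace RipsHomology

variable (𝕜 : Type*) [Field 𝕜] {X : Type*}

section Chains

lemma single_mem_chainsIn {n : ℕ} {K : (Fin n → X) → Prop} {σ : Fin n → X} (h : K σ) :
    Finsupp.single σ (1 : 𝕜) ∈ chainsIn 𝕜 n K :=
  Submodule.subset_span ⟨σ, h, rfl⟩

lemma chainsIn_mono {n : ℕ} {K K' : (Fin n → X) → Prop} (h : ∀ σ, K σ → K' σ) :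
    chainsIn 𝕜 n K ≤ chainsIn 𝕜 n K' :=
  Submodule.span_mono fun _ ⟨σ, hσ, hc⟩ => ⟨σ, h σ hσ, hc⟩

lemma map_mem_chainsIn {n k : ℕ} {K : (Fin n → X) → Prop} {K' : (Fin k → X) → Prop}
    (f : ((Fin n → X) →₀ 𝕜) →ₗ[𝕜] ((Fin k → X) →₀ 𝕜))
    (hf : ∀ σ, K σ → f (Finsupp.single σ 1) ∈ chainsIn 𝕜 k K')
    {c : (Fin n → X) →₀ 𝕜} (hc : c ∈ chainsIn 𝕜 n K) : f c ∈ chainsIn 𝕜 k K' :=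
  (Submodule.span_le (p := (chainsIn 𝕜 k K').comap f)).2
    (by rintro _ ⟨σ, hσ, rfl⟩; exact hf σ hσ) hc

lemma bdry_one_single (σ : Fin 2 → X) :
    bdry 𝕜 X 1 (Finsupp.single σ 1) =
      Finsupp.single (fun _ => σ 1) 1 - Finsupp.single (fun _ => σ 0) 1 := by
  have h0 : σ ∘ Fin.succ = fun _ => σ 1 := by funext j; fin_cases j; rfl
  have h1 : σ ∘ (1 : Fin 2).succAbove = fun _ => σ 0 := by funext j; fin_cases j; rfl
  simp [bdry, Fin.sum_univ_two, h0, h1, sub_eq_add_neg]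

lemma bdry_two_single (σ : Fin 3 → X) :
    bdry 𝕜 X 2 (Finsupp.single σ 1) =
      Finsupp.single ![σ 1, σ 2] 1 - Finsupp.single ![σ 0, σ 2] 1
        + Finsupp.single ![σ 0, σ 1] 1 := by
  have h0 : σ ∘ Fin.succ = ![σ 1, σ 2] := by funext j; fin_cases j <;> rfl
  have h1 : σ ∘ (1 : Fin 3).succAbove = ![σ 0, σ 2] := by funext j; fin_cases j <;> rfl
  have h2 : σ ∘ (2 : Fin 3).succAbove = ![σ 0, σ 1] := by funext j; fin_cases j <;> rfl
  simp [bdry, Fin.sum_univ_three, h0, h1, h2, sub_eq_add_neg]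

end Chains

section Subdivision

variable (m : (Fin 2 → X) → X)

noncomputable def subdivide : ((Fin 2 → X) →₀ 𝕜) →ₗ[𝕜] ((Fin 2 → X) →₀ 𝕜) :=
  Finsupp.lift ((Fin 2 → X) →₀ 𝕜) 𝕜 (Fin 2 → X) fun σ =>
    Finsupp.single ![σ 0, m σ] 1 + Finsupp.single ![m σ, σ 1] 1

noncomputable def subdivisionCone : ((Fin 2 → X) →₀ 𝕜) →ₗ[𝕜] ((Fin 3 → X) →₀ 𝕜) :=
  Finsupp.lift ((Fin 3 → X) →₀ 𝕜) 𝕜 (Fin 2 → X) fun σ =>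
    Finsupp.single ![σ 0, m σ, σ 1] 1

lemma subdivide_single (σ : Fin 2 → X) :
    subdivide 𝕜 m (Finsupp.single σ 1) =
      Finsupp.single ![σ 0, m σ] 1 + Finsupp.single ![m σ, σ 1] 1 := by
  simp [subdivide]

lemma subdivisionCone_single (σ : Fin 2 → X) :
    subdivisionCone 𝕜 m (Finsupp.single σ 1) = Finsupp.single ![σ 0, m σ, σ 1] 1 := by
  simp [subdivisionCone]

lemma bdry_subdivide (c : (Fin 2 → X) →₀ 𝕜) :
    bdry 𝕜 X 1 (subdivide 𝕜 m c) = bdry 𝕜 X 1 c := by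
  suffices h : (bdry 𝕜 X 1).comp (subdivide 𝕜 m) = bdry 𝕜 X 1 from LinearMap.congr_fun h c
  refine Finsupp.lhom_ext' fun σ => LinearMap.ext_ring ?_
  simp only [LinearMap.comp_apply, Finsupp.lsingle_apply]
  rw [subdivide_single, map_add, bdry_one_single, bdry_one_single, bdry_one_single]
  simp only [Matrix.cons_val_zero, Matrix.cons_val_one]
  abel

lemma bdry_subdivisionCone (c : (Fin 2 → X) →₀ 𝕜) :
    bdry 𝕜 X 2 (subdivisionCone 𝕜 m c) = subdivide 𝕜 m c - c := by
  suffices h : (bdry 𝕜 X 2).comp (subdivisionCone 𝕜 m) = subdivide 𝕜 m - LinearMap.id from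
    LinearMap.congr_fun h c
  refine Finsupp.lhom_ext' fun σ => LinearMap.ext_ring ?_
  have hσ : ![σ 0, σ 1] = σ := by funext i; fin_cases i <;> rfl
  simp only [LinearMap.comp_apply, LinearMap.sub_apply, LinearMap.id_apply,
    Finsupp.lsingle_apply]
  rw [subdivisionCone_single, subdivide_single,
    bdry_two_single]
  simp only [Matrix.cons_val_zero, Matrix.cons_val_one, Matrix.cons_val_two, Matrix.head_cons,
    Matrix.tail_cons, hσ]
  abel

end Subdivision

section Rips

variable [PseudoMetricSpace X]

def IsRipsSimplex (a : ℝ) {n : ℕ} (σ : Fin n → X) : Prop :=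
  ∀ i j, dist (σ i) (σ j) ≤ a

variable {𝕜}

lemma IsRipsSimplex.mono {a b : ℝ} {n : ℕ} {σ : Fin n → X} (h : IsRipsSimplex a σ)
    (hab : a ≤ b) : IsRipsSimplex b σ :=
  fun i j => (h i j).trans hab

lemma isRipsSimplex_pair {a : ℝ} {x y : X} (ha : 0 ≤ a) (hxy : dist x y ≤ a) :
    IsRipsSimplex a ![x, y] := by
  intro i j
  fin_cases i <;> fin_cases j <;> simp [dist_comm, ha, hxy]

lemma isRipsSimplex_triple {a : ℝ} {x y z : X} (ha : 0 ≤ a) (hxy : dist x y ≤ a)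
    (hxz : dist x z ≤ a) (hyz : dist y z ≤ a) : IsRipsSimplex a ![x, y, z] := by
  intro i j
  fin_cases i <;> fin_cases j <;> simp [dist_comm, ha, hxy, hxz, hyz]

def RipsHomologous (a : ℝ) (c c' : (Fin 2 → X) →₀ 𝕜) : Prop :=
  ∃ b ∈ chainsIn 𝕜 3 (IsRipsSimplex (X := X) a), c - c' = bdry 𝕜 X 2 b

lemma RipsHomologous.refl (a : ℝ) (c : (Fin 2 → X) →₀ 𝕜) : RipsHomologous a c c :=
  ⟨0, Submodule.zero_mem _, by simp⟩

lemma RipsHomologous.trans {a : ℝ} {c c' c'' : (Fin 2 → X) →₀ 𝕜}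
    (h : RipsHomologous a c c') (h' : RipsHomologous a c' c'') : RipsHomologous a c c'' := by
  obtain ⟨b, hb, hbc⟩ := h
  obtain ⟨b', hb', hbc'⟩ := h'
  refine ⟨b + b', Submodule.add_mem _ hb hb', ?_⟩
  rw [map_add, ← hbc, ← hbc']
  abel

lemma RipsHomologous.mono {a b : ℝ} {c c' : (Fin 2 → X) →₀ 𝕜} (h : RipsHomologous a c c')
    (hab : a ≤ b) : RipsHomologous b c c' :=
  let ⟨β, hβ, hβc⟩ := h
  ⟨β, chainsIn_mono 𝕜 (fun _ hσ => hσ.mono hab) hβ, hβc⟩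

lemma subdivide_mem_and_ripsHomologous {a a' : ℝ} (haa' : a' ≤ a) (m : (Fin 2 → X) → X)
    (hm : ∀ σ : Fin 2 → X, IsRipsSimplex a σ → dist (σ 0) (m σ) ≤ a' ∧ dist (σ 1) (m σ) ≤ a')
    {c : (Fin 2 → X) →₀ 𝕜} (hc : c ∈ chainsIn 𝕜 2 (IsRipsSimplex a)) :
    subdivide 𝕜 m c ∈ chainsIn 𝕜 2 (IsRipsSimplex a') ∧
      RipsHomologous a c (subdivide 𝕜 m c) := by
  refine ⟨map_mem_chainsIn 𝕜 _ (fun σ hσ => ?_) hc,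
    -subdivisionCone 𝕜 m c, Submodule.neg_mem _ (map_mem_chainsIn 𝕜 _ (fun σ hσ => ?_) hc),
    by rw [map_neg, bdry_subdivisionCone, neg_sub]⟩
  · obtain ⟨h0, h1⟩ := hm σ hσ
    have ha' : 0 ≤ a' := dist_nonneg.trans h0
    rw [subdivide_single]
    exact Submodule.add_mem _ (single_mem_chainsIn 𝕜 (isRipsSimplex_pair ha' h0))
      (single_mem_chainsIn 𝕜 (isRipsSimplex_pair ha' (by rwa [dist_comm])))
  · obtain ⟨h0, h1⟩ := hm σ hσ
    rw [subdivisionCone_single]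
    exact single_mem_chainsIn 𝕜 (isRipsSimplex_triple (dist_nonneg.trans (hσ 0 0))
      (h0.trans haa') (hσ 0 1) (by rw [dist_comm]; exact h1.trans haa'))

lemma exists_ripsHomologous_two_thirds
    (hpath : ∀ (x x' : X) (ε : ℝ), 0 < ε →
      ∃ z : X, max (dist x z) (dist x' z) ≤ dist x x' / 2 + ε)
    {a : ℝ} (ha : 0 < a) {c : (Fin 2 → X) →₀ 𝕜}
    (hc : c ∈ chainsIn 𝕜 2 (IsRipsSimplex a)) :
    ∃ c' ∈ chainsIn 𝕜 2 (IsRipsSimplex (2 / 3 * a)),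
      bdry 𝕜 X 1 c' = bdry 𝕜 X 1 c ∧ RipsHomologous a c c' := by
  choose m hm using fun σ : Fin 2 → X => hpath (σ 0) (σ 1) (a / 6) (by positivity)
  have hm' : ∀ σ : Fin 2 → X, IsRipsSimplex a σ →
      dist (σ 0) (m σ) ≤ 2 / 3 * a ∧ dist (σ 1) (m σ) ≤ 2 / 3 * a := by
    intro σ hσ
    have := hσ 0 1
    have := max_le_iff.1 (hm σ)
    constructor <;> linarith
  obtain ⟨hmem, hhom⟩ := subdivide_mem_and_ripsHomologous (by linarith) m hm' hc
  exact ⟨_, hmem, bdry_subdivide 𝕜 m c, hhom⟩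

lemma exists_ripsHomologous_two_thirds_pow
    (hpath : ∀ (x x' : X) (ε : ℝ), 0 < ε →
      ∃ z : X, max (dist x z) (dist x' z) ≤ dist x x' / 2 + ε)
    {q : ℝ} (hq : 0 < q) (n : ℕ)
    {c : (Fin 2 → X) →₀ 𝕜} (hc : c ∈ chainsIn 𝕜 2 (IsRipsSimplex q)) :
    ∃ c' ∈ chainsIn 𝕜 2 (IsRipsSimplex ((2 / 3) ^ n * q)),
      bdry 𝕜 X 1 c' = bdry 𝕜 X 1 c ∧ RipsHomologous q c c' := by
  induction n with
  | zero => exact ⟨c, by simpa using hc, rfl, .refl q c⟩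
  | succ n ih =>
    obtain ⟨c', hc', hbc', hhom'⟩ := ih
    have hpos : 0 < (2 / 3 : ℝ) ^ n * q := by positivity
    obtain ⟨c'', hc'', hbc'', hhom''⟩ := exists_ripsHomologous_two_thirds hpath hpos hc'
    have hle : (2 / 3 : ℝ) ^ n * q ≤ q :=
      mul_le_of_le_one_left hq.le (pow_le_one₀ (by norm_num) (by norm_num))
    refine ⟨c'', ?_, hbc''.trans hbc', hhom'.trans (hhom''.mono hle)⟩
    rwa [pow_succ, mul_comm _ (2 / 3 : ℝ), mul_assoc]

end Rips

end RipsHomology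

open RipsHomology in
theorem stmt14 (𝕜 : Type*) [Field 𝕜] {X : Type*} [MetricSpace X]
    -- path metric space: approximate midpoints exist
    (hpath : ∀ (x x' : X) (ε : ℝ), 0 < ε →
      ∃ z : X, max (dist x z) (dist x' z) ≤ dist x x' / 2 + ε)
    (p q : ℝ) (hp : 0 < p) (hpq : p < q)
    -- surjectivity of H₁(Rips(X, p)) → H₁(Rips(X, q)): every 1-cycle of
    -- Rips(X, q) is homologous in Rips(X, q) to a 1-cycle of Rips(X, p)
    (c : (Fin 2 → X) →₀ 𝕜)
    (hc : c ∈ chainsIn 𝕜 2 (fun σ : Fin 2 → X => ∀ i j, dist (σ i) (σ j) ≤ q))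
    (hcyc : bdry 𝕜 X 1 c = 0) :
    ∃ c' ∈ chainsIn 𝕜 2 (fun σ : Fin 2 → X => ∀ i j, dist (σ i) (σ j) ≤ p),
      bdry 𝕜 X 1 c' = 0 ∧
      ∃ b ∈ chainsIn 𝕜 3 (fun σ : Fin 3 → X => ∀ i j, dist (σ i) (σ j) ≤ q),
        c - c' = bdry 𝕜 X 2 b := by
  have hq : 0 < q := hp.trans hpq
  obtain ⟨n, hn⟩ := exists_pow_lt_of_lt_one (div_pos hp hq) (by norm_num : (2 / 3 : ℝ) < 1)
  have hnp : (2 / 3 : ℝ) ^ n * q ≤ p := ((lt_div_iff₀ hq).1 hn).le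
  obtain ⟨c', hc', hbc', hhom⟩ := exists_ripsHomologous_two_thirds_pow hpath hq n hc
  exact ⟨c', chainsIn_mono 𝕜 (fun _ hσ => IsRipsSimplex.mono hσ hnp) hc', hbc'.trans hcyc, hhom⟩
end

section
/- Let X be a geodesic δ-hyperbolic space and x, y, z ∈ X with pairwise distances a = d(y,z), b = d(z,x), c = d(x,y), all at most q, and a ≤ b ≤ c. Let ℓ, m, n be midpoints of geodesics [y,z], [z,x], [x,y] respectively. Then d(ℓ,m) ≤ q/2 + δ, d(ℓ,n) ≤ q/2 + δ, and d(m,n) ≤ q/2 + δ. -/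
/-!
Each midpoint is compared with a point of its own side that the thin-triangle condition pairs
with a point of the other side: for `ℓ, n` the pairing at the vertex `y` at distance `a / 2`,
for `m, n` the pairing at `x` at distance `c / 2`, and for `ℓ, m` the incircle points
`u ∈ [y, z]`, `v ∈ [z, x]` at `z`. Sliding along the sides costs `(c - a) / 2`, `(c - b) / 2`
and `(c - b) / 2 + (c - a) / 2` respectively, each at most `c / 2 ≤ q / 2` because
`a ≤ b ≤ c ≤ a + b`.
-/

/-- `g` parametrises a minimising geodesic from `x` to `y` (by arc length on
`[0, dist x y]`). -/
def IsGeodesicFrom {X : Type*} [MetricSpace X] (g : ℝ → X) (x y : X) : Prop :=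
  g 0 = x ∧ g (dist x y) = y ∧
    ∀ s ∈ Set.Icc 0 (dist x y), ∀ t ∈ Set.Icc 0 (dist x y), dist (g s) (g t) = |s - t|

open Set

namespace IsGeodesicFrom

variable {X : Type*} [MetricSpace X] {g h : ℝ → X} {x y x' y' : X}

theorem dist_apply_le (hg : IsGeodesicFrom g x y) {s t : ℝ} (hs : s ∈ Icc 0 (dist x y))
    (ht : t ∈ Icc 0 (dist x y)) (p : X) :
    dist (g s) p ≤ |s - t| + dist (g t) p := by
  rw [← hg.2.2 s hs t ht]
  exact dist_triangle _ _ _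

theorem dist_midpoint_le (hg : IsGeodesicFrom g x y) (hh : IsGeodesicFrom h x' y')
    {d d' t t' : ℝ} (hd : d = dist x y) (hd' : d' = dist x' y')
    (ht : t ∈ Icc 0 d) (ht' : t' ∈ Icc 0 d') :
    dist (g (d / 2)) (h (d' / 2)) ≤ |d / 2 - t| + dist (g t) (h t') + |d' / 2 - t'| := by
  subst hd hd'
  have half_mem {e : ℝ} (he : 0 ≤ e) : e / 2 ∈ Icc 0 e := ⟨by linarith, by linarith⟩
  calc dist (g (dist x y / 2)) (h (dist x' y' / 2))
      ≤ |dist x y / 2 - t| + dist (g t) (h (dist x' y' / 2)) :=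
        hg.dist_apply_le (half_mem dist_nonneg) ht _
    _ ≤ |dist x y / 2 - t| + (|dist x' y' / 2 - t'| + dist (h t') (g t)) := by
        rw [dist_comm (g t)]
        gcongr
        exact hh.dist_apply_le (half_mem dist_nonneg) ht' _
    _ = _ := by rw [dist_comm (h t')]; ring

end IsGeodesicFrom

theorem stmt16_general {X : Type*} [MetricSpace X] (δ q : ℝ)
    (x y z : X) (gxy gyz gzx : ℝ → X)
    (hxy : IsGeodesicFrom gxy x y) (hyz : IsGeodesicFrom gyz y z)
    (hzx : IsGeodesicFrom gzx z x)
    (a b c : ℝ) (ha : a = dist y z) (hb : b = dist z x) (hc : c = dist x y)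
    (hab : a ≤ b) (hbc : b ≤ c) (hcq : c ≤ q)
    -- δ-hyperbolicity of the triangle: along the two sides adjacent to each vertex,
    -- equidistant points (up to the Gromov product) are at distance at most δ
    (thin1 : ∀ t ∈ Set.Icc 0 ((b + c - a) / 2), dist (gxy t) (gzx (b - t)) ≤ δ)
    (thin2 : ∀ t ∈ Set.Icc 0 ((c + a - b) / 2), dist (gyz t) (gxy (c - t)) ≤ δ)
    (thin3 : ∀ t ∈ Set.Icc 0 ((a + b - c) / 2), dist (gzx t) (gyz (a - t)) ≤ δ) :
    dist (gyz (a / 2)) (gzx (b / 2)) ≤ q / 2 + δ ∧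
    dist (gyz (a / 2)) (gxy (c / 2)) ≤ q / 2 + δ ∧
    dist (gzx (b / 2)) (gxy (c / 2)) ≤ q / 2 + δ := by
  have ha0 : 0 ≤ a := ha ▸ dist_nonneg
  have hc_le : c ≤ a + b := by
    rw [ha, hb, hc, dist_comm y z, add_comm]
    exact dist_triangle_left x y z
  refine ⟨?_, ?_, ?_⟩
  · have hγ := thin3 ((a + b - c) / 2) ⟨by linarith, le_rfl⟩
    have := hyz.dist_midpoint_le hzx ha hb (t := a - (a + b - c) / 2) (t' := (a + b - c) / 2)
      ⟨by linarith, by linarith⟩ ⟨by linarith, by linarith⟩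
    rw [abs_of_nonpos (by linarith), abs_of_nonneg (by linarith)] at this
    rw [dist_comm] at hγ
    linarith
  · have hβ := thin2 (a / 2) ⟨by linarith, by linarith⟩
    have := hyz.dist_midpoint_le hxy ha hc (t := a / 2) (t' := c - a / 2)
      ⟨by linarith, by linarith⟩ ⟨by linarith, by linarith⟩
    rw [sub_self, abs_zero, abs_of_nonpos (by linarith)] at this
    linarith
  · have hα := thin1 (c / 2) ⟨by linarith, by linarith⟩
    have := hzx.dist_midpoint_le hxy hb hc (t := b - c / 2) (t' := c / 2)
      ⟨by linarith, by linarith⟩ ⟨by linarith, by linarith⟩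
    rw [abs_of_nonneg (by linarith), sub_self, abs_zero] at this
    rw [dist_comm] at hα
    linarith

theorem stmt16 {X : Type*} [MetricSpace X] (δ q : ℝ) (hδ : 0 ≤ δ)
    (x y z : X) (gxy gyz gzx : ℝ → X)
    (hxy : IsGeodesicFrom gxy x y) (hyz : IsGeodesicFrom gyz y z)
    (hzx : IsGeodesicFrom gzx z x)
    (a b c : ℝ) (ha : a = dist y z) (hb : b = dist z x) (hc : c = dist x y)
    (hab : a ≤ b) (hbc : b ≤ c) (hcq : c ≤ q)
    -- δ-hyperbolicity of the triangle: along the two sides adjacent to each vertex,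
    -- equidistant points (up to the Gromov product) are at distance at most δ
    (thin1 : ∀ t ∈ Set.Icc 0 ((b + c - a) / 2), dist (gxy t) (gzx (b - t)) ≤ δ)
    (thin2 : ∀ t ∈ Set.Icc 0 ((c + a - b) / 2), dist (gyz t) (gxy (c - t)) ≤ δ)
    (thin3 : ∀ t ∈ Set.Icc 0 ((a + b - c) / 2), dist (gzx t) (gyz (a - t)) ≤ δ) :
    dist (gyz (a / 2)) (gzx (b / 2)) ≤ q / 2 + δ ∧
    dist (gyz (a / 2)) (gxy (c / 2)) ≤ q / 2 + δ ∧
    dist (gzx (b / 2)) (gxy (c / 2)) ≤ q / 2 + δ :=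
  stmt16_general δ q x y z gxy gyz gzx hxy hyz hzx a b c ha hb hc hab hbc hcq thin1 thin2 thin3
end
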